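/- arXiv:2605.13526 — 6 statements merged into one kernel-verified Lean document; each statement's English description precedes it below -/
import Mathlib

section
/- Let x ∈ [0,1] and N ∈ ℕ. Define p_{N,x}(n) = [N ≤ n] · (x^{n−N}/(n−N)! − x^{n−N+1}/(n−N+1)!) for n ∈ ℕ, where [·] is the Iverson bracket. Then Σ_{n∈ℕ} p_{0,x}(n) · [n even] = e^{−x}. -/
theorem von_neumann_even_run_length
    (x : ℝ) (hx : x ∈ Set.Icc (0:ℝ) 1) :
    (∑' n : ℕ, (if Even n then
        x ^ n / (Nat.factorial n : ℝ) - x ^ (n + 1) / (Nat.factorial (n + 1) : ℝ)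
      else 0)) = Real.exp (-x) := by
  set f : ℕ → ℝ := fun n => (-x) ^ n / (Nat.factorial n : ℝ)
  have hf : Summable f := Real.summable_pow_div_factorial (-x)
  have hfe : Summable (fun n => if Even n then f n else 0) := by
    exact (hf.indicator {n | Even n}).congr fun n => by
      simp [Set.indicator_apply, Set.mem_setOf_eq]
  have hfo : Summable (fun n => if Odd n then f n else 0) := by
    exact (hf.indicator {n | Odd n}).congr fun n => by
      simp [Set.indicator_apply, Set.mem_setOf_eq]
  have hexp : Real.exp (-x) = ∑' n, f n := by
    rw [Real.exp_eq_exp_ℝ, NormedSpace.exp_eq_tsum_div]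
  have hsplit : (∑' n, f n) =
      (∑' n, if Even n then f n else 0) + ∑' n, (if Odd n then f n else 0) := by
    rw [← Summable.tsum_add hfe hfo]
    refine tsum_congr fun n => ?_
    rcases Nat.even_or_odd n with h | h
    · simp [h, Nat.not_odd_iff_even.2 h]
    · simp [h, Nat.not_even_iff_odd.2 h]
  have hterm : ∀ n : ℕ, (if Even n then
        x ^ n / (Nat.factorial n : ℝ) - x ^ (n + 1) / (Nat.factorial (n + 1) : ℝ)
      else 0) = (if Even n then f n else 0) + (if Even n then f (n + 1) else 0) := by
    intro n
    by_cases h : Even n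
    · have h1 : ¬ Even (n + 1) := by simp [Nat.even_add_one, h]
      simp only [h, if_true, f, h.neg_pow, Odd.neg_pow (Nat.not_even_iff_odd.1 h1)]
      ring
    · simp [h]
  have hshift : (∑' n, (if Even n then f (n + 1) else 0)) =
      ∑' n, (if Odd n then f n else 0) := by
    rw [Summable.tsum_eq_zero_add hfo]
    simp [Nat.odd_add_one]
  have hfe2 : Summable (fun n => if Even n then f (n + 1) else 0) := by
    have := hfo.comp_injective (add_left_injective 1)
    exact this.congr fun n => by simp [Nat.odd_add_one]
  calc (∑' n : ℕ, (if Even n then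
        x ^ n / (Nat.factorial n : ℝ) - x ^ (n + 1) / (Nat.factorial (n + 1) : ℝ)
      else 0))
      = ∑' n, ((if Even n then f n else 0) + (if Even n then f (n + 1) else 0)) :=
        tsum_congr hterm
    _ = (∑' n, if Even n then f n else 0) + ∑' n, (if Even n then f (n + 1) else 0) :=
        Summable.tsum_add hfe hfe2
    _ = Real.exp (-x) := by rw [hshift, hexp, hsplit]
end

section
/- Let F : ℕ → ℝ≥0 be bounded, N ∈ ℕ, x ∈ [0,1], and define V(N,x) = Σ_{m∈ℕ} [N ≤ m]·(x^{m−N}/(m−N)! − x^{m−N+1}/(m−N+1)!)·F(m). Define g(y) = [y ≤ x]·V(N+1, y) + [x ≤ y]·F(N). Then ∫₀¹ g(y) dy = V(N, x). -/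
/-! Writing `t k x = x ^ k / k ! - x ^ (k + 1) / (k + 1)!` (`expTermDiff`), the series `V F N x` is
`∑ k, t k x * F (N + k)`. Since `∫₀ˣ t k = t (k + 1)` and `t 0 x = 1 - x`, integrating
`V F (N + 1)` over `[0, x]` term by term (the terms are dominated by `sup |F| / k !`) gives every
term of `V F N x` except the first, `(1 - x) * F N`, which is exactly the integral of the second
summand of the integrand over `[x, 1]`. -/

open intervalIntegral

noncomputable def V (F : ℕ → ℝ) (N : ℕ) (x : ℝ) : ℝ :=
  ∑' m : ℕ, (if N ≤ m then
      x ^ (m - N) / (Nat.factorial (m - N) : ℝ)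
        - x ^ (m - N + 1) / (Nat.factorial (m - N + 1) : ℝ)
    else 0) * F m

open MeasureTheory Set Nat
open scoped Interval

noncomputable def expTermDiff (k : ℕ) (x : ℝ) : ℝ :=
  x ^ k / (k ! : ℝ) - x ^ (k + 1) / ((k + 1)! : ℝ)

lemma expTermDiff_zero (x : ℝ) : expTermDiff 0 x = 1 - x := by
  simp [expTermDiff]

lemma continuous_expTermDiff (k : ℕ) : Continuous (expTermDiff k) := by
  unfold expTermDiff; fun_prop

lemma hasDerivAt_pow_succ_div_factorial (n : ℕ) (y : ℝ) :
    HasDerivAt (fun y : ℝ => y ^ (n + 1) / (n + 1)!) (y ^ n / n !) y := by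
  have h := (hasDerivAt_pow (n + 1) y).div_const ((n + 1)! : ℝ)
  rwa [Nat.add_sub_cancel, Nat.factorial_succ, Nat.cast_mul,
    mul_div_mul_left _ _ (by positivity), ← Nat.cast_mul, ← Nat.factorial_succ] at h

lemma hasDerivAt_expTermDiff_succ (k : ℕ) (y : ℝ) :
    HasDerivAt (expTermDiff (k + 1)) (expTermDiff k y) y :=
  (hasDerivAt_pow_succ_div_factorial k y).fun_sub (hasDerivAt_pow_succ_div_factorial (k + 1) y)

lemma integral_expTermDiff (k : ℕ) (x : ℝ) :
    ∫ y in (0 : ℝ)..x, expTermDiff k y = expTermDiff (k + 1) x := by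
  rw [integral_eq_sub_of_hasDerivAt (fun y _ => hasDerivAt_expTermDiff_succ k y)
    ((continuous_expTermDiff k).intervalIntegrable 0 x)]
  simp [expTermDiff]

lemma abs_expTermDiff_le {x : ℝ} (hx : x ∈ Icc (0 : ℝ) 1) (k : ℕ) :
    |expTermDiff k x| ≤ (k ! : ℝ)⁻¹ := by
  obtain ⟨hx0, hx1⟩ := hx
  have hsucc : x ^ (k + 1) / (k + 1)! ≤ x ^ k / k ! :=
    div_le_div₀ (by positivity) (pow_le_pow_of_le_one hx0 hx1 k.le_succ) (by positivity)
      (by exact_mod_cast Nat.factorial_le k.le_succ)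
  have hle : x ^ k / k ! ≤ (k ! : ℝ)⁻¹ := by
    rw [div_eq_mul_inv]
    exact mul_le_of_le_one_left (by positivity) (pow_le_one₀ hx0 hx1)
  rw [expTermDiff, abs_of_nonneg (sub_nonneg.2 hsucc)]
  linarith [show (0 : ℝ) ≤ x ^ (k + 1) / (k + 1)! by positivity]

lemma V_eq_tsum (F : ℕ → ℝ) (N : ℕ) (x : ℝ) :
    V F N x = ∑' k, expTermDiff k x * F (N + k) := by
  rw [V, ← (add_right_injective N).tsum_eq]
  · exact tsum_congr fun k => by simp [expTermDiff]
  · intro m hm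
    by_cases h : N ≤ m
    · exact ⟨m - N, by simp only; omega⟩
    · simp [h] at hm

section Bounded

variable {F : ℕ → ℝ} {M : ℝ}

lemma abs_expTermDiff_mul_le (hF : ∀ n, |F n| ≤ M) {x : ℝ} (hx : x ∈ Icc (0 : ℝ) 1)
    (N k : ℕ) : ‖expTermDiff k x * F (N + k)‖ ≤ M * (k ! : ℝ)⁻¹ := by
  rw [Real.norm_eq_abs, abs_mul, mul_comm]
  exact mul_le_mul (hF _) (abs_expTermDiff_le hx k) (abs_nonneg _)
    ((abs_nonneg _).trans (hF 0))

lemma summable_mul_inv_factorial (M : ℝ) : Summable fun k : ℕ => M * (k ! : ℝ)⁻¹ := by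
  simpa using (Real.summable_pow_div_factorial 1).mul_left M

lemma hasSum_V (hF : ∀ n, |F n| ≤ M) (N : ℕ) {x : ℝ} (hx : x ∈ Icc (0 : ℝ) 1) :
    HasSum (fun k => expTermDiff k x * F (N + k)) (V F N x) := by
  rw [V_eq_tsum]
  exact ((summable_mul_inv_factorial M).of_norm_bounded
    (abs_expTermDiff_mul_le hF hx N)).hasSum

lemma continuousOn_V (hF : ∀ n, |F n| ≤ M) (N : ℕ) : ContinuousOn (V F N) (Icc 0 1) := by
  simp only [funext (V_eq_tsum F N)]
  exact continuousOn_tsum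
    (fun k => ((continuous_expTermDiff k).mul continuous_const).continuousOn)
    (summable_mul_inv_factorial M) fun k _ hx => abs_expTermDiff_mul_le hF hx N k

lemma integral_V_succ (hF : ∀ n, |F n| ≤ M) (N : ℕ) {x : ℝ} (hx : x ∈ Icc (0 : ℝ) 1) :
    ∫ y in (0 : ℝ)..x, V F (N + 1) y = V F N x - (1 - x) * F N := by
  have hsub : Ι 0 x ⊆ Icc 0 1 := by
    rw [uIoc_of_le hx.1]; exact Ioc_subset_Icc_self.trans (Icc_subset_Icc_right hx.2)
  have hint := hasSum_integral_of_dominated_convergence (μ := volume) (a := 0) (b := x)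
    (F := fun k y => expTermDiff k y * F (N + 1 + k)) (fun k _ => M * (k ! : ℝ)⁻¹)
    (fun k => ((continuous_expTermDiff k).mul continuous_const).aestronglyMeasurable)
    (fun k => .of_forall fun y hy => abs_expTermDiff_mul_le hF (hsub hy) (N + 1) k)
    (.of_forall fun _ _ => summable_mul_inv_factorial M) intervalIntegrable_const
    (.of_forall fun y hy => hasSum_V hF (N + 1) (hsub hy))
  have hshift := (hasSum_nat_add_iff' 1).2 (hasSum_V hF N hx)
  simp only [Finset.sum_range_one, expTermDiff_zero, add_zero] at hshift
  refine hint.unique (hshift.congr_fun fun k => ?_)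
  rw [intervalIntegral.integral_mul_const, integral_expTermDiff, add_assoc, add_comm 1 k]

end Bounded

lemma integral_indicator_Iic_add_indicator_Ici {f : ℝ → ℝ} {a b x : ℝ}
    (hf : IntervalIntegrable f volume a b) (hx : x ∈ Icc a b) (c : ℝ) :
    ∫ y in a..b,
        ((if y ≤ x then (1 : ℝ) else 0) * f y + (if x ≤ y then (1 : ℝ) else 0) * c)
      = (∫ y in a..x, f y) + (b - x) * c := by
  have hf' : IntegrableOn f (Icc a b) := (intervalIntegrable_iff_integrableOn_Icc_of_le
    (hx.1.trans hx.2)).1 hf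
  have hsplit : ∀ y,
      (if y ≤ x then (1 : ℝ) else 0) * f y + (if x ≤ y then (1 : ℝ) else 0) * c =
        (Iic x).indicator f y + (Ici x).indicator (fun _ => c) y := fun y => by
    simp only [indicator_apply, mem_Iic, mem_Ici, ite_mul, one_mul, zero_mul]
  have hleft : Icc a b ∩ Iic x = Icc a x := by
    ext y; simp only [mem_inter_iff, mem_Icc, mem_Iic]; grind
  have hright : Icc a b ∩ Ici x = Icc x b := by
    ext y; simp only [mem_inter_iff, mem_Icc, mem_Ici]; grind
  simp only [hsplit, integral_of_le (hx.1.trans hx.2), integral_of_le hx.1,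
    ← integral_Icc_eq_integral_Ioc]
  rw [integral_add (hf'.indicator measurableSet_Iic)
      ((integrableOn_const measure_Icc_lt_top.ne).indicator measurableSet_Ici),
    setIntegral_indicator measurableSet_Iic, setIntegral_indicator measurableSet_Ici,
    hleft, hright, setIntegral_const, Real.volume_real_Icc_of_le hx.2, smul_eq_mul]

theorem decreasing_trial_expectation_preservation
    (F : ℕ → ℝ)
    (hnonneg : ∀ n, 0 ≤ F n)
    (hbdd : ∃ M : ℝ, ∀ n, F n ≤ M)
    (N : ℕ) (x : ℝ) (hx : x ∈ Set.Icc (0:ℝ) 1) :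
    (∫ y in (0:ℝ)..1,
        ((if y ≤ x then (1:ℝ) else 0) * V F (N + 1) y
          + (if x ≤ y then (1:ℝ) else 0) * F N))
      = V F N x := by
  obtain ⟨M, hM⟩ := hbdd
  have hF : ∀ n, |F n| ≤ M := fun n => (abs_of_nonneg (hnonneg n)).trans_le (hM n)
  rw [integral_indicator_Iic_add_indicator_Ici
    ((continuousOn_V hF (N + 1)).intervalIntegrable_of_Icc zero_le_one) hx,
    integral_V_succ hF N hx, sub_add_cancel]
end

section
/- Let F : Bool → ℝ≥0. Then (F(true)/2) + Σ_{m∈ℕ} ((1/2)^{m+1}/(m+1)! − (1/2)^{m+2}/(m+2)!) · F(m mod 2 = 1) = e^{−1/2}·F(true) + (1 − e^{−1/2})·F(false). -/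
/-!
Write `F (m odd)` as `(F true + F false) / 2 + (-1) ^ m * (F false - F true) / 2`. With
`b k = x ^ k / k!`, the series `∑ (b (m + 1) - b (m + 2))` telescopes to `x`, while its alternating
version is `-∑_{k ≥ 1} (-x) ^ k / k! - ∑_{k ≥ 2} (-x) ^ k / k! = 2 - 2 e^{-x} - x`.
-/

open Nat Finset

lemma apply_decide_mod_two_eq_one {K : Type*} [Field K] [CharZero K] (G : Bool → K) (m : ℕ) :
    G (decide (m % 2 = 1)) = (G true + G false) / 2 + (-1) ^ m * ((G false - G true) / 2) := by
  rcases Nat.even_or_odd m with hm | hm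
  · simp [hm.neg_one_pow, Nat.even_iff.mp hm]
    ring
  · simp [hm.neg_one_pow, Nat.odd_iff.mp hm]
    ring

namespace Real

lemma hasSum_pow_div_factorial_nat_add (x : ℝ) (k : ℕ) :
    HasSum (fun m => x ^ (m + k) / (m + k)!) (exp x - ∑ i ∈ range k, x ^ i / i !) := by
  refine (hasSum_nat_add_iff' (f := fun i => x ^ i / i !) k).mpr ?_
  rw [exp_eq_exp_ℝ]
  exact NormedSpace.expSeries_div_hasSum_exp x

lemma hasSum_pow_div_factorial_succ (x : ℝ) :
    HasSum (fun m => x ^ (m + 1) / (m + 1)!) (exp x - 1) := by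
  simpa using hasSum_pow_div_factorial_nat_add x 1

lemma hasSum_pow_div_factorial_succ_succ (x : ℝ) :
    HasSum (fun m => x ^ (m + 2) / (m + 2)!) (exp x - 1 - x) := by
  simpa [sum_range_succ, sub_add_eq_sub_sub] using hasSum_pow_div_factorial_nat_add x 2

lemma hasSum_pow_div_factorial_succ_sub_succ_succ (x : ℝ) :
    HasSum (fun m => x ^ (m + 1) / (m + 1)! - x ^ (m + 2) / (m + 2)!) x := by
  simpa using (hasSum_pow_div_factorial_succ x).sub (hasSum_pow_div_factorial_succ_succ x)

lemma hasSum_neg_one_pow_mul_pow_div_factorial_succ_sub_succ_succ (x : ℝ) :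
    HasSum (fun m => (-1) ^ m * (x ^ (m + 1) / (m + 1)! - x ^ (m + 2) / (m + 2)!))
      (2 - 2 * exp (-x) - x) := by
  rw [show 2 - 2 * exp (-x) - x = -(exp (-x) - 1) - (exp (-x) - 1 - -x) by ring]
  refine ((hasSum_pow_div_factorial_succ (-x)).neg.sub
    (hasSum_pow_div_factorial_succ_succ (-x))).congr_fun fun m => ?_
  rw [neg_pow x, neg_pow x, pow_succ (-1 : ℝ) m, pow_succ (-1 : ℝ)]
  ring

lemma hasSum_pow_div_factorial_succ_sub_succ_succ_mul_parity (x : ℝ) (G : Bool → ℝ) :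
    HasSum (fun m => (x ^ (m + 1) / (m + 1)! - x ^ (m + 2) / (m + 2)!) * G (decide (m % 2 = 1)))
      ((1 - exp (-x)) * G false + (exp (-x) - 1 + x) * G true) := by
  rw [show (1 - exp (-x)) * G false + (exp (-x) - 1 + x) * G true =
    (G true + G false) / 2 * x + (G false - G true) / 2 * (2 - 2 * exp (-x) - x) by ring]
  refine (((hasSum_pow_div_factorial_succ_sub_succ_succ x).mul_left _).add
    ((hasSum_neg_one_pow_mul_pow_div_factorial_succ_sub_succ_succ x).mul_left _)).congr_fun
    fun m => ?_
  rw [apply_decide_mod_two_eq_one G m]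
  ring

end Real

theorem bernoulli_half_exp_expectation_general
    (F : Bool → ℝ) :
    F true / 2
      + (∑' m : ℕ,
          ((1/2 : ℝ) ^ (m + 1) / (Nat.factorial (m + 1) : ℝ)
            - (1/2 : ℝ) ^ (m + 2) / (Nat.factorial (m + 2) : ℝ))
          * F (decide (m % 2 = 1)))
      = Real.exp (-(1/2)) * F true + (1 - Real.exp (-(1/2))) * F false := by
  rw [(Real.hasSum_pow_div_factorial_succ_sub_succ_succ_mul_parity (1/2) F).tsum_eq]
  ring

theorem bernoulli_half_exp_expectation
    (F : Bool → ℝ) (hnonneg : ∀ b, 0 ≤ F b) :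
    F true / 2
      + (∑' m : ℕ,
          ((1/2 : ℝ) ^ (m + 1) / (Nat.factorial (m + 1) : ℝ)
            - (1/2 : ℝ) ^ (m + 2) / (Nat.factorial (m + 2) : ℝ))
          * F (decide (m % 2 = 1)))
      = Real.exp (-(1/2)) * F true + (1 - Real.exp (-(1/2))) * F false :=
  bernoulli_half_exp_expectation_general F
end

section
/- Let F : ℕ → ℝ≥0 be bounded, Z = Σ_{j∈ℕ} e^{−j²/2}, and define h(k, b) = [b]·F(k) + [¬b]·Σ_{j∈ℕ} (e^{−j²/2}/Z)·F(j), and g(k) = e^{−k(k−1)/2}·h(k,true) + (1 − e^{−k(k−1)/2})·h(k,false). Then Σ_{k∈ℕ} (e^{−1/2})^k · (1 − e^{−1/2}) · g(k) = Σ_{k∈ℕ} (e^{−k²/2}/Z) · F(k). -/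
open Real

/-- Rejection sampling is exact. Accepting `k` with probability `q k` turns the geometric weight
into `(1 - a) * w k`; the rejected mass `(1 - a) * (a ^ k - w k)` is paid at the `w`-mean `s`, and
`hs` makes the `w`-parts cancel, leaving `(1 - a) * s * ∑ a ^ k = s`. -/
theorem hasSum_geometric_accept_reject {a s : ℝ} {w q x : ℕ → ℝ} (ha : |a| < 1)
    (hq : ∀ k, a ^ k * q k = w k) (hw : Summable w) (hwx : Summable fun k ↦ w k * x k)
    (hs : (∑' k, w k) * s = ∑' k, w k * x k) :
    HasSum (fun k ↦ a ^ k * (1 - a) * (q k * x k + (1 - q k) * s)) s := by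
  have ha1 : 1 - a ≠ 0 := by linarith [(abs_lt.mp ha).2]
  have hterm : ∀ k, a ^ k * (1 - a) * (q k * x k + (1 - q k) * s)
      = (1 - a) * (w k * x k) - (1 - a) * s * w k + (1 - a) * s * a ^ k := fun k ↦ by
    linear_combination (1 - a) * (x k - s) * hq k
  have hsum := ((hwx.hasSum.mul_left (1 - a)).sub (hw.hasSum.mul_left ((1 - a) * s))).add
    ((hasSum_geometric_of_abs_lt_one ha).mul_left ((1 - a) * s))
  have hval : (1 - a) * ∑' k, w k * x k - (1 - a) * s * ∑' k, w k + (1 - a) * s * (1 - a)⁻¹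
      = s := by
    rw [← hs]
    field_simp
    ring
  rwa [hval, ← funext hterm] at hsum

theorem exp_neg_half_pow_mul_exp (k : ℕ) :
    exp (-(1 / 2)) ^ k * exp (-((k : ℝ) * ((k : ℝ) - 1)) / 2) = exp (-(k : ℝ) ^ 2 / 2) := by
  rw [← exp_nat_mul, ← exp_add]
  ring_nf

theorem abs_exp_neg_half_lt_one : |exp (-(1 / 2))| < 1 := by
  rw [abs_of_pos (exp_pos _), exp_lt_one_iff]
  norm_num

theorem summable_exp_neg_sq_div_two : Summable fun k : ℕ ↦ exp (-(k : ℝ) ^ 2 / 2) := by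
  refine (summable_geometric_of_abs_lt_one abs_exp_neg_half_lt_one).of_nonneg_of_le
    (fun k ↦ (exp_pos _).le) fun k ↦ ?_
  rw [← exp_neg_half_pow_mul_exp k]
  refine mul_le_of_le_one_right (pow_nonneg (exp_pos _).le _) (exp_le_one_iff.mpr ?_)
  have hk : (0 : ℝ) ≤ k * (k - 1) := by
    rcases k with _ | k
    · simp
    · push_cast
      nlinarith
  linarith

theorem gaussian_integer_part_expectation
    (F : ℕ → ℝ)
    (hnonneg : ∀ n, 0 ≤ F n)
    (hbdd : ∃ M : ℝ, ∀ n, F n ≤ M)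
    (Z : ℝ) (hZ : Z = ∑' j : ℕ, Real.exp (-(j : ℝ) ^ 2 / 2))
    (h : ℕ → Bool → ℝ)
    (hh : ∀ k b, h k b = (if b then (1:ℝ) else 0) * F k
        + (if ¬ b then (1:ℝ) else 0) * ∑' j : ℕ, (Real.exp (-(j : ℝ) ^ 2 / 2) / Z) * F j)
    (g : ℕ → ℝ)
    (hg : ∀ k, g k = Real.exp (-((k : ℝ) * ((k : ℝ) - 1)) / 2) * h k true
        + (1 - Real.exp (-((k : ℝ) * ((k : ℝ) - 1)) / 2)) * h k false) :
    (∑' k : ℕ, (Real.exp (-(1/2))) ^ k * (1 - Real.exp (-(1/2))) * g k)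
      = ∑' k : ℕ, (Real.exp (-(k : ℝ) ^ 2 / 2) / Z) * F k := by
  obtain ⟨M, hM⟩ := hbdd
  set S := ∑' k : ℕ, (exp (-(k : ℝ) ^ 2 / 2) / Z) * F k
  have hZpos : 0 < Z := hZ ▸ summable_exp_neg_sq_div_two.tsum_pos (fun _ ↦ (exp_pos _).le) 0
    (exp_pos _)
  have hsumF : Summable fun k : ℕ ↦ exp (-(k : ℝ) ^ 2 / 2) * F k :=
    (summable_exp_neg_sq_div_two.mul_right M).of_nonneg_of_le
      (fun k ↦ mul_nonneg (exp_pos _).le (hnonneg k))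
      fun k ↦ mul_le_mul_of_nonneg_left (hM k) (exp_pos _).le
  have hS : Z * S = ∑' k : ℕ, exp (-(k : ℝ) ^ 2 / 2) * F k := by
    simp only [S, div_mul_eq_mul_div, tsum_div_const]
    field_simp
  have hgS : ∀ k, g k = exp (-((k : ℝ) * ((k : ℝ) - 1)) / 2) * F k
      + (1 - exp (-((k : ℝ) * ((k : ℝ) - 1)) / 2)) * S := fun k ↦ by
    simp [hg, hh, S]
  simp only [hgS]
  exact (hasSum_geometric_accept_reject abs_exp_neg_half_lt_one exp_neg_half_pow_mul_exp
    summable_exp_neg_sq_div_two hsumF (hZ ▸ hS)).tsum_eq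
end

section
/- Let F : ℕ × [0,1] → ℝ≥0 be bounded and measurable (Riemann integrable in the second argument), and for N ∈ ℕ define E(N) = Σ_{k∈ℕ} ∫₀¹ [N ≤ k]·e^{−(x+k−N)}·F(k,x) dx. Then ∫₀¹ e^{−x}·F(N,x) dx + (∫₀¹ (1 − e^{−x}) dx) · E(N+1) = E(N). -/
open MeasureTheory intervalIntegral

noncomputable def negExpE (F : ℕ → ℝ → ℝ) (N : ℕ) : ℝ :=
  ∑' k : ℕ, ∫ x in (0:ℝ)..1,
    (if N ≤ k then (1:ℝ) else 0) * Real.exp (-(x + (k : ℝ) - (N : ℝ))) * F k x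

/-! Only the terms with `k ≥ N` contribute to `negExpE F N`. The term `k = N` is
`∫ e^{-x} F(N, x)`, and each later term of `negExpE F N` is `e⁻¹ = ∫₀¹ (1 - e^{-x})` times the
corresponding term of `negExpE F (N + 1)`. Splitting off the first term of the series needs it
to converge, which follows from the geometric bound `M e^{-(k - N)}` on its terms. -/

open Real Set

theorem integral_one_sub_exp_neg : ∫ x in (0:ℝ)..1, (1 - exp (-x)) = exp (-1) := by
  have h_exp_neg : ∫ x in (0:ℝ)..1, exp (-x) = 1 - exp (-1) := by
    simp [integral_comp_neg (fun x => exp x), integral_exp]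
  rw [intervalIntegral.integral_sub intervalIntegrable_const
    ((by fun_prop : Continuous fun x => exp (-x)).intervalIntegrable 0 1), h_exp_neg]
  simp

theorem summable_integral_exp_neg_mul {G : ℕ → ℝ → ℝ} {M : ℝ}
    (hG : ∀ j, ∀ x ∈ Icc (0:ℝ) 1, |G j x| ≤ M) :
    Summable fun j : ℕ => ∫ x in (0:ℝ)..1, exp (-(x + j)) * G j x := by
  refine Summable.of_norm_bounded
    ((summable_geometric_of_lt_one (exp_nonneg (-1)) (exp_lt_one_iff.2 (by norm_num))).mul_left M)
    fun j => ?_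
  have hbound : ∀ x ∈ uIoc (0:ℝ) 1, ‖exp (-(x + j)) * G j x‖ ≤ M * exp (-1) ^ j := by
    intro x hx
    rw [uIoc_of_le zero_le_one] at hx
    have h_exp : exp (-(x + j)) ≤ exp (-1) ^ j := by
      rw [← exp_nat_mul, exp_le_exp]
      linarith [hx.1]
    rw [norm_mul, norm_of_nonneg (exp_nonneg _), mul_comm]
    exact mul_le_mul (hG j x (Ioc_subset_Icc_self hx)) h_exp (exp_nonneg _)
      ((abs_nonneg _).trans (hG j x (Ioc_subset_Icc_self hx)))
  simpa using norm_integral_le_of_norm_le_const hbound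

theorem negExpE_eq_tsum_nat_add (F : ℕ → ℝ → ℝ) (N : ℕ) :
    negExpE F N = ∑' j : ℕ, ∫ x in (0:ℝ)..1, exp (-(x + j)) * F (N + j) x := by
  rw [negExpE, ← (add_right_injective N).tsum_eq]
  · push_cast
    simp only [le_add_iff_nonneg_right, zero_le, if_true, one_mul]
    congr 1 with j
    congr 1 with x
    ring_nf
  · intro k hk
    by_cases hNk : N ≤ k
    · exact ⟨k - N, Nat.add_sub_cancel' hNk⟩
    · simp [hNk] at hk

theorem neg_exponential_recurrence_general
    (F : ℕ → ℝ → ℝ)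
    (hnonneg : ∀ k, ∀ x ∈ Set.Icc (0:ℝ) 1, 0 ≤ F k x)
    (hbdd : ∃ M : ℝ, ∀ k, ∀ x ∈ Set.Icc (0:ℝ) 1, F k x ≤ M)
    (N : ℕ) :
    (∫ x in (0:ℝ)..1, Real.exp (-x) * F N x)
      + (∫ x in (0:ℝ)..1, (1 - Real.exp (-x))) * negExpE F (N + 1)
      = negExpE F N := by
  obtain ⟨M, hM⟩ := hbdd
  have h_summable := summable_integral_exp_neg_mul (G := fun j => F (N + j)) (M := M)
    fun j x hx => (abs_of_nonneg (hnonneg _ x hx)).trans_le (hM _ x hx)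
  have h_shift (j : ℕ) : ∫ x in (0:ℝ)..1, exp (-(x + ↑(j + 1))) * F (N + (j + 1)) x
      = exp (-1) * ∫ x in (0:ℝ)..1, exp (-(x + j)) * F (N + 1 + j) x := by
    rw [← intervalIntegral.integral_const_mul, ← add_assoc, add_right_comm N]
    congr 1 with x
    rw [← mul_assoc, ← exp_add]
    push_cast
    ring_nf
  rw [integral_one_sub_exp_neg, negExpE_eq_tsum_nat_add F N, negExpE_eq_tsum_nat_add F (N + 1),
    h_summable.tsum_eq_zero_add, tsum_congr h_shift, tsum_mul_left]
  simp

theorem neg_exponential_recurrence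
    (F : ℕ → ℝ → ℝ)
    (hnonneg : ∀ k, ∀ x ∈ Set.Icc (0:ℝ) 1, 0 ≤ F k x)
    (hbdd : ∃ M : ℝ, ∀ k, ∀ x ∈ Set.Icc (0:ℝ) 1, F k x ≤ M)
    (hint : ∀ k, IntervalIntegrable (F k) volume 0 1)
    (N : ℕ) :
    (∫ x in (0:ℝ)..1, Real.exp (-x) * F N x)
      + (∫ x in (0:ℝ)..1, (1 - Real.exp (-x))) * negExpE F (N + 1)
      = negExpE F N :=
  neg_exponential_recurrence_general F hnonneg hbdd N
end

section
/- Let x, y ∈ ℝ and A, B ∈ ℤ with |A − x·2^{p+2}| ≤ 1 and |B − y·2^{p+2}| ≤ 1. Let z = A + B and C = z/4 + (z mod 4)/2 computed with integer division (rounding toward zero) where z mod 4 ∈ {0,1,2,3} for nonnegative z and appropriately for negative z such that C is the nearest integer to z/4. Then |C − (x+y)·2^p| ≤ 1. -/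
/-
Rounding `z` to the nearest multiple of 4 moves it by at most 2, and the two input errors add up
to at most 2 at scale `2 ^ (p + 2)`; the total error 4 at that scale is error 1 at scale `2 ^ p`.
-/

theorem Int.abs_four_mul_roundQuarter_sub_le (z : ℤ) : |4 * (z / 4 + z % 4 / 2) - z| ≤ 2 := by
  rw [abs_le]
  omega

theorem abs_sub_div_le_of_abs_mul_sub_le {K : Type*} [Field K] [LinearOrder K]
    [IsStrictOrderedRing K] {k c z t d e : K} (hk : 0 < k)
    (hc : |k * c - z| ≤ d) (hz : |z - t| ≤ e) : |c - t / k| ≤ (d + e) / k := by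
  have hkc : k * (c - t / k) = (k * c - z) + (z - t) := by field_simp; ring
  rw [le_div_iff₀ hk, ← abs_of_pos hk, ← abs_mul, abs_of_pos hk, mul_comm, hkc]
  exact (abs_add_le _ _).trans (add_le_add hc hz)

theorem radd_correct
    (x y : ℝ) (p : ℤ) (A B : ℤ)
    (hA : |(A : ℝ) - x * 2 ^ (p + 2)| ≤ 1)
    (hB : |(B : ℝ) - y * 2 ^ (p + 2)| ≤ 1)
    (z C : ℤ) (hz : z = A + B) (hC : C = z / 4 + (z % 4) / 2) :
    |(C : ℝ) - (x + y) * 2 ^ p| ≤ 1 := by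
  have hround : |4 * (C : ℝ) - z| ≤ 2 := by
    exact_mod_cast hC ▸ Int.abs_four_mul_roundQuarter_sub_le z
  have hsum : |(z : ℝ) - (x + y) * 2 ^ (p + 2)| ≤ 2 := by
    have hsplit : (z : ℝ) - (x + y) * 2 ^ (p + 2)
        = ((A : ℝ) - x * 2 ^ (p + 2)) + ((B : ℝ) - y * 2 ^ (p + 2)) := by
      rw [hz]; push_cast; ring
    rw [hsplit]
    linarith [abs_add_le ((A : ℝ) - x * 2 ^ (p + 2)) ((B : ℝ) - y * 2 ^ (p + 2))]
  have hscale : (x + y) * (2 : ℝ) ^ p = (x + y) * 2 ^ (p + 2) / 4 := by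
    rw [zpow_add₀ two_ne_zero]; ring
  have := abs_sub_div_le_of_abs_mul_sub_le (by norm_num) hround hsum
  rw [hscale]
  linarith
end
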